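/- arXiv:1205.3667 — 2 statements merged into one kernel-verified Lean document; each statement's English description precedes it below -/
import Mathlib

section
/- Let V = (Z/rZ)^{2g} with g ≥ 2, equipped with the standard symplectic (alternating, nondegenerate) bilinear form e defined by e(a_i, b_j) = δ_{ij}, e(a_i, a_j) = e(b_i, b_j) = 0 for a symplectic basis {a_1, b_1, ..., a_g, b_g}. If f : V × V → Z/rZ is a bilinear alternating form such that e(x, y) = 0 implies f(x, y) = 0 for all x, y ∈ V, then f is a scalar multiple of e (i.e., f = c·e for some c ∈ Z/rZ). -/
/-- Standard basis vector `a_i` in `(ℤ/rℤ)^{2g}`, indexed by `Fin g ⊕ Fin g`. -/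
def aVec (r g : ℕ) (i : Fin g) : (Fin g ⊕ Fin g) → ZMod r := Pi.single (Sum.inl i) 1

/-- Standard basis vector `b_i`. -/
def bVec (r g : ℕ) (i : Fin g) : (Fin g ⊕ Fin g) → ZMod r := Pi.single (Sum.inr i) 1

/-- The standard symplectic form `e` on `(ℤ/rℤ)^{2g}`:
`e(a_i, b_j) = δ_{ij}`, `e(a_i, a_j) = e(b_i, b_j) = 0`. -/
def sympForm (r g : ℕ) (x y : (Fin g ⊕ Fin g) → ZMod r) : ZMod r :=
  ∑ i : Fin g, (x (Sum.inl i) * y (Sum.inr i) - x (Sum.inr i) * y (Sum.inl i))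

/-!
Extend `f` to a bilinear form `B` (additivity already gives `ℤ/rℤ`-linearity). Since `e` is
alternating, so is `B`, and `B` vanishes on all basis pairs except `(a_i, b_i)` and `(b_i, a_i)`.
For `i ≠ j` the vectors `a_i + a_j` and `b_i - b_j` are `e`-orthogonal, which forces
`B(a_i, b_i) = B(a_j, b_j) =: c`; hence `B` and `c • e` agree on a basis.
-/

open LinearMap (BilinForm)

namespace LinearMap

variable {M N P : Type*} [AddCommGroup M] [AddCommGroup N] [AddCommGroup P]

def mk₂OfBiadditive (n : ℕ) [Module (ZMod n) M] [Module (ZMod n) N] [Module (ZMod n) P]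
    (f : M → N → P) (H1 : ∀ x x' y, f (x + x') y = f x y + f x' y)
    (H2 : ∀ x y y', f x (y + y') = f x y + f x y') : M →ₗ[ZMod n] N →ₗ[ZMod n] P :=
  mk₂ (ZMod n) f H1 (fun c x y => ZMod.map_smul (AddMonoidHom.mk' (f · y) (H1 · · y)) c x) H2
    (fun c x y => ZMod.map_smul (AddMonoidHom.mk' (f x) (H2 x)) c y)

end LinearMap

section StandardSymplecticForm

variable (R ι : Type*) [CommRing R] [Fintype ι] [DecidableEq ι]

def standardSymplecticForm : BilinForm R (ι ⊕ ι → R) :=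
  Matrix.toBilin' (Matrix.fromBlocks 0 1 (-1) 0)

variable {R ι}

theorem standardSymplecticForm_apply (x y : ι ⊕ ι → R) :
    standardSymplecticForm R ι x y = ∑ i, (x (.inl i) * y (.inr i) - x (.inr i) * y (.inl i)) := by
  rw [Finset.sum_sub_distrib, sub_eq_add_neg]
  simp [standardSymplecticForm, Matrix.toBilin'_apply, Fintype.sum_sum_type, Matrix.one_apply]

theorem standardSymplecticForm_self (x : ι ⊕ ι → R) : standardSymplecticForm R ι x x = 0 := by
  simp [standardSymplecticForm_apply, mul_comm]

theorem standardSymplecticForm_single (s t : ι ⊕ ι) :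
    standardSymplecticForm R ι (Pi.single s 1) (Pi.single t 1) =
      Matrix.fromBlocks 0 1 (-1) 0 s t :=
  Matrix.toBilin'_single _ s t

theorem exists_eq_smul_standardSymplecticForm {B : BilinForm R (ι ⊕ ι → R)}
    (hB : ∀ x y, standardSymplecticForm R ι x y = 0 → B x y = 0) :
    ∃ c : R, B = c • standardSymplecticForm R ι := by
  have hneg : ∀ x y, -B x y = B y x :=
    LinearMap.IsAlt.neg fun x => hB x x (standardSymplecticForm_self x)
  have hcross (i j : ι) (hij : i ≠ j) : B (Pi.single (.inl i) 1) (Pi.single (.inr j) 1) = 0 :=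
    hB _ _ (by simp [standardSymplecticForm_single, hij])
  have hdiag (i j : ι) : B (Pi.single (.inl i) 1) (Pi.single (.inr i) 1) =
      B (Pi.single (.inl j) 1) (Pi.single (.inr j) 1) := by
    rcases eq_or_ne i j with rfl | hij
    · rfl
    have h := hB (Pi.single (.inl i) 1 + Pi.single (.inl j) 1)
      (Pi.single (.inr i) 1 - Pi.single (.inr j) 1)
      (by simp [standardSymplecticForm_single, hij, hij.symm])
    simp only [map_add, map_sub, LinearMap.add_apply, hcross i j hij, hcross j i hij.symm] at h
    linear_combination h
  obtain ⟨c, hc⟩ : ∃ c, ∀ i, B (Pi.single (.inl i) 1) (Pi.single (.inr i) 1) = c := by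
    rcases isEmpty_or_nonempty ι with hι | ⟨⟨i₀⟩⟩
    · exact ⟨0, hι.elim⟩
    · exact ⟨_, fun i => hdiag i i₀⟩
  refine ⟨c, LinearMap.ext_basis (Pi.basisFun R _) (Pi.basisFun R _) ?_⟩
  rintro (i | i) (j | j)
  · simp [hB, standardSymplecticForm_single]
  · rcases eq_or_ne i j with rfl | hij
    · simp [hc, standardSymplecticForm_single]
    · simp [hB, standardSymplecticForm_single, hij]
  · rcases eq_or_ne i j with rfl | hij
    · rw [Pi.basisFun_apply, Pi.basisFun_apply, ← hneg, hc]
      simp [standardSymplecticForm_single]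
    · simp [hB, standardSymplecticForm_single, hij]
  · simp [hB, standardSymplecticForm_single]

end StandardSymplecticForm

theorem sympForm_eq_standardSymplecticForm (r g : ℕ) (x y : Fin g ⊕ Fin g → ZMod r) :
    sympForm r g x y = standardSymplecticForm (ZMod r) (Fin g) x y :=
  (standardSymplecticForm_apply x y).symm

theorem stmt0_general (r g : ℕ)
    (f : ((Fin g ⊕ Fin g) → ZMod r) → ((Fin g ⊕ Fin g) → ZMod r) → ZMod r)
    (hadd₁ : ∀ x x' y, f (x + x') y = f x y + f x' y)
    (hadd₂ : ∀ x y y', f x (y + y') = f x y + f x y')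
    (hvanish : ∀ x y, sympForm r g x y = 0 → f x y = 0) :
    ∃ c : ZMod r, ∀ x y, f x y = c * sympForm r g x y := by
  obtain ⟨c, hc⟩ := exists_eq_smul_standardSymplecticForm
    (B := LinearMap.mk₂OfBiadditive r f hadd₁ hadd₂)
    fun x y h => hvanish x y ((sympForm_eq_standardSymplecticForm r g x y).trans h)
  refine ⟨c, fun x y => ?_⟩
  rw [sympForm_eq_standardSymplecticForm]
  exact congr($hc x y)

/-- If a bilinear alternating form `f` on `(ℤ/rℤ)^{2g}` (g ≥ 2) vanishes on every
pair on which the standard symplectic form `e` vanishes, then `f` is a scalar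
multiple of `e`. -/
theorem stmt0 (r g : ℕ) (hr : 2 ≤ r) (hg : 2 ≤ g)
    (f : ((Fin g ⊕ Fin g) → ZMod r) → ((Fin g ⊕ Fin g) → ZMod r) → ZMod r)
    (hadd₁ : ∀ x x' y, f (x + x') y = f x y + f x' y)
    (hadd₂ : ∀ x y y', f x (y + y') = f x y + f x y')
    (halt : ∀ x, f x x = 0)
    (hvanish : ∀ x y, sympForm r g x y = 0 → f x y = 0) :
    ∃ c : ZMod r, ∀ x y, f x y = c * sympForm r g x y :=
  stmt0_general r g f hadd₁ hadd₂ hvanish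
end

section
/- Let V = (Z/rZ)^{2g} with g ≥ 2 and standard symplectic form e. Let G' ⊆ Alt(V) be the set of alternating bilinear forms f such that f(σ, τ) = 0 for every pair (σ, τ) of order-r, linearly independent elements with e(σ, τ) = 0. Then every f ∈ G' is a scalar multiple of e. (Strengthening of the basic lemma: it suffices to test only pairs of primitive, linearly independent isotropic vectors.) -/
/-!
Both `f` and `e` are biadditive, hence `ℤ/rℤ`-bilinear, so it suffices to compare them on the
basis `a_i, b_i`. Distinct basis vectors are an independent pair, isotropic unless it is
`{a_i, b_i}`, so `f` vanishes on all of them except `f(a_i, b_i)`. For `i ≠ j` the vectors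
`a_i + a_j` and `b_i - b_j` form an independent isotropic pair as well, and expanding
`f(a_i + a_j, b_i - b_j) = 0` gives `f(a_i, b_i) = f(a_j, b_j)`.
-/

section Biadditive

variable (n : ℕ) {M N P : Type*} [AddCommGroup M] [AddCommGroup N] [AddCommGroup P]
  [Module (ZMod n) M] [Module (ZMod n) N] [Module (ZMod n) P]

def LinearMap.mk₂OfBiadditive_s17 (f : M → N → P)
    (h₁ : ∀ x x' y, f (x + x') y = f x y + f x' y)
    (h₂ : ∀ x y y', f x (y + y') = f x y + f x y') :
    M →ₗ[ZMod n] N →ₗ[ZMod n] P :=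
  LinearMap.mk₂ (ZMod n) f h₁
    (fun c x y => ZMod.map_smul (AddMonoidHom.mk' (f · y) fun x x' => h₁ x x' y) c x) h₂
    (fun c x y => ZMod.map_smul (AddMonoidHom.mk' (f x) (h₂ x)) c y)

end Biadditive

theorem LinearIndependent.pair_of_apply {R ι : Type*} [Ring R] {σ τ : ι → R} {u v : ι}
    (hσu : σ u = 1) (hτu : τ u = 0) (hσv : σ v = 0) (hτv : τ v = 1) :
    LinearIndependent R ![σ, τ] := by
  refine LinearIndependent.pair_iff.mpr fun s t h => ⟨?_, ?_⟩
  · simpa [hσu, hτu] using congrFun h u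
  · simpa [hσv, hτv] using congrFun h v

namespace Symplectic

variable {r g : ℕ}

theorem sympForm_add_left (x x' y : Fin g ⊕ Fin g → ZMod r) :
    sympForm r g (x + x') y = sympForm r g x y + sympForm r g x' y := by
  simp only [sympForm, Pi.add_apply, ← Finset.sum_add_distrib]
  exact Finset.sum_congr rfl fun i _ => by ring

theorem sympForm_add_right (x y y' : Fin g ⊕ Fin g → ZMod r) :
    sympForm r g x (y + y') = sympForm r g x y + sympForm r g x y' := by
  simp only [sympForm, Pi.add_apply, ← Finset.sum_add_distrib]
  exact Finset.sum_congr rfl fun i _ => by ring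

variable (r g) in
def sympBilin :
    LinearMap.BilinForm (ZMod r) (Fin g ⊕ Fin g → ZMod r) :=
  LinearMap.mk₂OfBiadditive_s17 r (sympForm r g) sympForm_add_left sympForm_add_right

theorem sympBilin_apply (x y : Fin g ⊕ Fin g → ZMod r) :
    sympBilin r g x y = sympForm r g x y := rfl

theorem sympForm_aVec_aVec (i j : Fin g) : sympForm r g (aVec r g i) (aVec r g j) = 0 := by
  simp [sympForm, aVec, Pi.single_apply]

theorem sympForm_bVec_bVec (i j : Fin g) : sympForm r g (bVec r g i) (bVec r g j) = 0 := by
  simp [sympForm, bVec, Pi.single_apply]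

theorem sympForm_aVec_bVec (i j : Fin g) :
    sympForm r g (aVec r g i) (bVec r g j) = if i = j then 1 else 0 := by
  simp [sympForm, aVec, bVec, Pi.single_apply, eq_comm]

theorem sympForm_swap (x y : Fin g ⊕ Fin g → ZMod r) :
    sympForm r g y x = -sympForm r g x y := by
  simp only [sympForm, ← Finset.sum_neg_distrib]
  exact Finset.sum_congr rfl fun i _ => by ring

variable (r g) in
/-- The forms making up the paper's `G'`. -/
def VanishesOnIsotropicPairs (B : LinearMap.BilinForm (ZMod r) (Fin g ⊕ Fin g → ZMod r)) :
    Prop :=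
  ∀ σ τ : Fin g ⊕ Fin g → ZMod r,
    LinearIndependent (ZMod r) ![σ, τ] → sympForm r g σ τ = 0 → B σ τ = 0

section VanishesOnIsotropicPairs

variable {B : LinearMap.BilinForm (ZMod r) (Fin g ⊕ Fin g → ZMod r)}

theorem apply_aVec_aVec_eq_zero (hB : B.IsAlt) (hvanish : VanishesOnIsotropicPairs r g B)
    (i j : Fin g) : B (aVec r g i) (aVec r g j) = 0 := by
  rcases eq_or_ne i j with rfl | hij
  · exact hB _
  have hindep : LinearIndependent (ZMod r) ![aVec r g i, aVec r g j] :=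
    .pair_of_apply (u := .inl i) (v := .inl j) (by simp [aVec]) (by simp [aVec, hij.symm])
      (by simp [aVec, hij]) (by simp [aVec])
  exact hvanish _ _ hindep (sympForm_aVec_aVec i j)

theorem apply_bVec_bVec_eq_zero (hB : B.IsAlt) (hvanish : VanishesOnIsotropicPairs r g B)
    (i j : Fin g) : B (bVec r g i) (bVec r g j) = 0 := by
  rcases eq_or_ne i j with rfl | hij
  · exact hB _
  have hindep : LinearIndependent (ZMod r) ![bVec r g i, bVec r g j] :=
    .pair_of_apply (u := .inr i) (v := .inr j) (by simp [bVec]) (by simp [bVec, hij.symm])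
      (by simp [bVec, hij]) (by simp [bVec])
  exact hvanish _ _ hindep (sympForm_bVec_bVec i j)

theorem apply_aVec_bVec_eq_zero_of_ne (hvanish : VanishesOnIsotropicPairs r g B) {i j : Fin g}
    (hij : i ≠ j) : B (aVec r g i) (bVec r g j) = 0 := by
  have hindep : LinearIndependent (ZMod r) ![aVec r g i, bVec r g j] :=
    .pair_of_apply (u := .inl i) (v := .inr j) (by simp [aVec]) (by simp [bVec])
      (by simp [aVec]) (by simp [bVec])
  exact hvanish _ _ hindep (by simp [sympForm_aVec_bVec, hij])

theorem apply_aVec_bVec_self_eq (hvanish : VanishesOnIsotropicPairs r g B) (i j : Fin g) :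
    B (aVec r g i) (bVec r g i) = B (aVec r g j) (bVec r g j) := by
  rcases eq_or_ne i j with rfl | hij
  · rfl
  have hindep :
      LinearIndependent (ZMod r) ![aVec r g i + aVec r g j, bVec r g i - bVec r g j] :=
    .pair_of_apply (u := .inl i) (v := .inr i) (by simp [aVec, hij.symm]) (by simp [bVec])
      (by simp [aVec]) (by simp [bVec, hij.symm])
  have hiso : sympBilin r g (aVec r g i + aVec r g j) (bVec r g i - bVec r g j) = 0 := by
    simp only [map_add, map_sub, LinearMap.add_apply, sympBilin_apply, sympForm_aVec_bVec,
      if_neg hij, if_neg hij.symm]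
    ring
  have h := hvanish _ _ hindep hiso
  simp only [map_add, map_sub, LinearMap.add_apply, apply_aVec_bVec_eq_zero_of_ne hvanish hij,
    apply_aVec_bVec_eq_zero_of_ne hvanish hij.symm] at h
  linear_combination h

theorem eq_smul_sympBilin (hB : B.IsAlt) (hvanish : VanishesOnIsotropicPairs r g B)
    (i₀ : Fin g) : B = B (aVec r g i₀) (bVec r g i₀) • sympBilin r g := by
  have hab (i j : Fin g) : B (aVec r g i) (bVec r g j) =
      B (aVec r g i₀) (bVec r g i₀) * sympForm r g (aVec r g i) (bVec r g j) := by
    rcases eq_or_ne i j with rfl | hij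
    · simp [sympForm_aVec_bVec, apply_aVec_bVec_self_eq hvanish i i₀]
    · simp [sympForm_aVec_bVec, hij, apply_aVec_bVec_eq_zero_of_ne hvanish hij]
  refine LinearMap.ext_basis (Pi.basisFun _ _) (Pi.basisFun _ _) ?_
  rintro (i | i) (j | j) <;>
    simp only [Pi.basisFun_apply, LinearMap.smul_apply, sympBilin_apply, smul_eq_mul, ← aVec.eq_1,
      ← bVec.eq_1]
  · rw [sympForm_aVec_aVec, mul_zero, apply_aVec_aVec_eq_zero hB hvanish]
  · exact hab i j
  · rw [← hB.neg_eq, hab, sympForm_swap (aVec r g j), mul_neg]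
  · rw [sympForm_bVec_bVec, mul_zero, apply_bVec_bVec_eq_zero hB hvanish]

end VanishesOnIsotropicPairs

end Symplectic

open Symplectic in
theorem stmt17_general (r g : ℕ) (hg : 2 ≤ g)
    (f : ((Fin g ⊕ Fin g) → ZMod r) → ((Fin g ⊕ Fin g) → ZMod r) → ZMod r)
    (hadd₁ : ∀ x x' y, f (x + x') y = f x y + f x' y)
    (hadd₂ : ∀ x y y', f x (y + y') = f x y + f x y')
    (halt : ∀ x, f x x = 0)
    (hvanish : ∀ σ τ : (Fin g ⊕ Fin g) → ZMod r,
      (∀ m n : ZMod r, m • σ + n • τ = 0 → m = 0 ∧ n = 0) →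
      sympForm r g σ τ = 0 → f σ τ = 0) :
    ∃ c : ZMod r, ∀ x y, f x y = c * sympForm r g x y := by
  let B := LinearMap.mk₂OfBiadditive_s17 r f hadd₁ hadd₂
  have hB : B.IsAlt := halt
  have hBvanish : VanishesOnIsotropicPairs r g B := fun σ τ hστ =>
    hvanish σ τ (LinearIndependent.pair_iff.mp hστ)
  let i₀ : Fin g := ⟨0, by omega⟩
  exact ⟨f (aVec r g i₀) (bVec r g i₀),
    fun x y => congr($(eq_smul_sympBilin hB hBvanish i₀) x y)⟩

/-- Strengthening of the basic lemma: if an alternating bilinear form `f` on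
`V = (ℤ/rℤ)^{2g}` (g ≥ 2) satisfies `f(σ,τ) = 0` for every pair `(σ,τ)` of
linearly independent elements of order `r` (i.e. generating a submodule
isomorphic to `(ℤ/rℤ)²`) with `e(σ,τ) = 0`, then `f` is a scalar multiple of
the standard symplectic form `e`. -/
theorem stmt17 (r g : ℕ) (hr : 2 ≤ r) (hg : 2 ≤ g)
    (f : ((Fin g ⊕ Fin g) → ZMod r) → ((Fin g ⊕ Fin g) → ZMod r) → ZMod r)
    (hadd₁ : ∀ x x' y, f (x + x') y = f x y + f x' y)
    (hadd₂ : ∀ x y y', f x (y + y') = f x y + f x y')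
    (halt : ∀ x, f x x = 0)
    (hvanish : ∀ σ τ : (Fin g ⊕ Fin g) → ZMod r,
      (∀ m n : ZMod r, m • σ + n • τ = 0 → m = 0 ∧ n = 0) →
      sympForm r g σ τ = 0 → f σ τ = 0) :
    ∃ c : ZMod r, ∀ x y, f x y = c * sympForm r g x y :=
  stmt17_general r g hg f hadd₁ hadd₂ halt hvanish
end
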